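/- A DAG G is in ST_k (every vertex v has μ_s(v) ≤ k or μ_t(v) ≤ k) if and only if there is a partition V = V1 ∪ V2 with no edges from V2 to V1 such that every vertex of V1 has μ_s ≤ k (in G) and every vertex of V2 has μ_t ≤ k (in G). -/

import Mathlib

open List

section Defs

variable {V : Type*} {α : Type*}

/-- A border of `t` is a proper prefix of `t` that is also a proper suffix of `t`. -/
def IsBorder (b t : List α) : Prop :=
  b <+: t ∧ b <:+ t ∧ b.length < t.length

/-- A directed graph (edge relation) is acyclic. -/
def Acyclic (E : V → V → Prop) : Prop :=
  ∀ v, ¬ Relation.TransGen E v v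

def IsSource (E : V → V → Prop) (v : V) : Prop := ∀ u, ¬ E u v

def IsSink (E : V → V → Prop) (v : V) : Prop := ∀ w, ¬ E v w

/-- A path is a nonempty list of vertices with consecutive edges. -/
def IsPath (E : V → V → Prop) (p : List V) : Prop := p ≠ [] ∧ p.Chain' E

/-- The edge `(u,v)` occurs (as a consecutive pair) on the path `p`. -/
def EdgeOn (p : List V) (u v : V) : Prop := ∃ l₁ l₂, p = l₁ ++ u :: v :: l₂

/-- A source-to-sink path. -/
def SrcSinkPath (E : V → V → Prop) (p : List V) : Prop :=
  IsPath E p ∧ (∃ s, p.head? = some s ∧ IsSource E s) ∧ ∃ t, p.getLast? = some t ∧ IsSink E t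

/-- `μ_s(v)`: the number of source-to-`v` paths. -/
noncomputable def muS (E : V → V → Prop) (v : V) : ℕ :=
  Set.ncard {p : List V | IsPath E p ∧ (∃ s, p.head? = some s ∧ IsSource E s) ∧ p.getLast? = some v}

/-- `μ_t(v)`: the number of `v`-to-sink paths. -/
noncomputable def muT (E : V → V → Prop) (v : V) : ℕ :=
  Set.ncard {p : List V | IsPath E p ∧ p.head? = some v ∧ ∃ t, p.getLast? = some t ∧ IsSink E t}

/-- `μ(e)` for `e = (u,v)`: the number of source-to-sink paths containing the edge `(u,v)`. -/
noncomputable def muE (E : V → V → Prop) (u v : V) : ℕ :=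
  Set.ncard {p : List V | SrcSinkPath E p ∧ EdgeOn p u v}

def NoIsolated (E : V → V → Prop) : Prop := ∀ v : V, (∃ u, E u v) ∨ ∃ w, E v w

/-- `G` is a `k`-funnel: every source-to-sink path contains a `k`-private edge. -/
def KFunnel (E : V → V → Prop) (k : ℕ) : Prop :=
  ∀ p, SrcSinkPath E p → ∃ u v, EdgeOn p u v ∧ muE E u v ≤ k

/-- `G` is a funnel: every source-to-sink path contains a private edge. -/
def Funnel (E : V → V → Prop) : Prop :=
  ∀ p, SrcSinkPath E p → ∃ u v, EdgeOn p u v ∧ muE E u v = 1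

/-- `B_v`: the set of lengths `i` such that some path ending at `v` spells `S[1..i]`
(with `0` included for the empty path). -/
def MatchSet (E : V → V → Prop) (ℓ : V → α) (S : List α) (v : V) : Set ℕ :=
  {i | i ≤ S.length ∧ (i = 0 ∨ ∃ p, IsPath E p ∧ p.getLast? = some v ∧ p.map ℓ = S.take i)}

end Defs

/-! Take `V₁ = {v | μ_s(v) ≤ k}` and `V₂` its complement. No edge goes from `V₂` to `V₁`
because `μ_s` is monotone along edges: appending `v` to a source-to-`u` path injects into the
source-to-`v` paths, a finite set since paths in a finite acyclic graph have no repeated vertex. -/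

theorem Acyclic.nodup_of_isChain {V : Type*} {E : V → V → Prop} (hE : Acyclic E) {p : List V}
    (hp : p.IsChain E) : p.Nodup := by
  have : Std.Irrefl (Relation.TransGen E) := ⟨hE⟩
  exact (List.isChain_iff_pairwise.mp (hp.imp (S := Relation.TransGen E) fun _ _ => .single)).nodup

theorem Acyclic.finite_setOf_isChain {V : Type*} [Fintype V] {E : V → V → Prop}
    (hE : Acyclic E) :
    {p : List V | p.IsChain E}.Finite :=
  (List.finite_length_le V (Fintype.card V)).subset fun _ hp =>
    (hE.nodup_of_isChain hp).length_le_card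

theorem Acyclic.muS_le_of_rel {V : Type*} [Fintype V] {E : V → V → Prop} (hE : Acyclic E)
    {u v : V} (huv : E u v) : muS E u ≤ muS E v := by
  refine Set.ncard_le_ncard_of_injOn (· ++ [v]) ?_ (List.append_left_injective [v]).injOn
    (hE.finite_setOf_isChain.subset fun p hp => hp.1.2)
  rintro p ⟨⟨hne, hchain⟩, ⟨s, hhead, hsource⟩, hlast⟩
  refine ⟨⟨by simp, hchain.append (List.isChain_singleton v) ?_⟩,
    ⟨s, by rwa [List.head?_append_of_ne_nil _ hne], hsource⟩, by simp⟩
  simp_all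

/-- `G ∈ ST_k` iff `V` partitions into `V₁` (all `μ_s ≤ k`) and `V₂` (all
`μ_t ≤ k`) with no edges from `V₂` to `V₁`. -/
theorem stmt13 {V : Type*} [Fintype V] (E : V → V → Prop) (hE : Acyclic E) (k : ℕ) :
    (∀ v, muS E v ≤ k ∨ muT E v ≤ k) ↔
      ∃ V₁ V₂ : Set V, V₁ ∪ V₂ = Set.univ ∧ Disjoint V₁ V₂ ∧
        (∀ u ∈ V₂, ∀ w ∈ V₁, ¬ E u w) ∧
        (∀ v ∈ V₁, muS E v ≤ k) ∧ (∀ v ∈ V₂, muT E v ≤ k) := by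
  constructor
  · intro hST
    refine ⟨{v | muS E v ≤ k}, {v | muS E v ≤ k}ᶜ, Set.union_compl_self _,
      disjoint_compl_right, fun u hu w hw huw => hu ((hE.muS_le_of_rel huw).trans hw), fun v hv => hv,
      fun v hv => (hST v).resolve_left hv⟩
  · rintro ⟨V₁, V₂, hcover, -, -, hV₁, hV₂⟩ v
    have hv : v ∈ V₁ ∪ V₂ := hcover ▸ Set.mem_univ v
    exact hv.imp (hV₁ v) (hV₂ v)
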